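/- The monotone convolution is weakly continuous: if (μ_n) and (ν_n) are sequences of probability measures on the unit circle S¹ converging weakly to probability measures μ and ν respectively, then μ_n ▷ ν_n converges weakly to μ ▷ ν. -/

import Mathlib

open MeasureTheory Metric

noncomputable instance : MeasurableSpace Circle := borel Circle
instance : BorelSpace Circle := ⟨rfl⟩

/-- `ψ_μ(z) = ∫_{S¹} zx/(1-zx) dμ(x)` for a measure `μ` on the unit circle. -/
noncomputable def psiM (μ : Measure Circle) (z : ℂ) : ℂ :=
  ∫ x : Circle, (z * x) / (1 - z * x) ∂μ

/-- The K-transform `K_μ(z) = ψ_μ(z)/(1 + ψ_μ(z))` of a measure on the unit circle. -/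
noncomputable def Km (μ : Measure Circle) (z : ℂ) : ℂ :=
  psiM μ z / (1 + psiM μ z)

open Filter

/-!
Weak convergence gives `ψ_{μₙ} → ψ_μ` and `ψ_{νₙ} → ψ_ν` pointwise on the disc. Since
`Re (1 + ψ_σ(z)) > 1/2` there, every `K_σ` maps the disc into itself, and the `ψ_σ` are uniformly
Lipschitz on smaller discs; hence `K_{μₙ}(K_{νₙ}(z)) → K_μ(K_ν(z))`, i.e. `ψ_{ρₙ} → ψ_ρ`
pointwise. The expansion `1 + ψ_σ(z) = ∑ₖ (∫ xᵏ dσ) zᵏ` has a tail bounded uniformly in `σ`, so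
the moments of `ρₙ` converge one by one. On the circle `x̄ = x⁻¹`, so moments and their conjugates
are the integrals of all trigonometric monomials, which span a dense subspace of `C(S¹, ℂ)` by
Stone–Weierstrass; integration against a probability measure is 1-Lipschitz for the sup norm,
so convergence extends to every continuous function.
-/

open Topology Complex ComplexConjugate

theorem Continuous.integrable_of_compactSpace {X E : Type*} [TopologicalSpace X] [CompactSpace X]
    [MeasurableSpace X] [OpensMeasurableSpace X] [NormedAddCommGroup E] {σ : Measure X}
    [IsFiniteMeasure σ] {f : X → E} (hf : Continuous f) : Integrable f σ :=
  hf.integrable_of_hasCompactSupport (.of_compactSpace f)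

theorem one_div_one_add_norm_le_re_inv_one_sub {w : ℂ} (hw : ‖w‖ < 1) :
    1 / (1 + ‖w‖) ≤ (1 - w)⁻¹.re := by
  have hsq : w.re ^ 2 + w.im ^ 2 = ‖w‖ ^ 2 := by
    rw [← normSq_eq_norm_sq, normSq_apply]; ring
  have hre : -‖w‖ ≤ w.re := neg_le_of_abs_le (abs_re_le_norm w)
  have hre' : w.re < 1 := (re_le_norm w).trans_lt hw
  simp only [inv_re, normSq_apply, sub_re, one_re, sub_im, one_im]
  rw [div_le_div_iff₀ (by positivity) (by nlinarith)]
  nlinarith [mul_nonneg (neg_le_iff_add_nonneg.mp hre) (sub_nonneg.mpr hw.le)]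

theorem MeasureTheory.ProbabilityMeasure.tendsto_of_forall_integral_tendsto_of_dense
    {X ι : Type*} [TopologicalSpace X] [CompactSpace X] [MeasurableSpace X]
    [OpensMeasurableSpace X] {l : Filter ι} {ρs : ι → ProbabilityMeasure X}
    {ρ : ProbabilityMeasure X} {S : Set C(X, ℂ)} (hS : Dense S)
    (h : ∀ g ∈ S, Tendsto (fun i => ∫ x, g x ∂ρs i) l (𝓝 (∫ x, g x ∂ρ))) :
    Tendsto ρs l (𝓝 ρ) := by
  have hlip : ∀ σ : ProbabilityMeasure X, LipschitzWith 1 fun g : C(X, ℂ) => ∫ x, g x ∂σ :=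
    fun σ => LipschitzWith.of_dist_le_mul fun g g' => by
      rw [NNReal.coe_one, one_mul, dist_eq_norm, dist_eq_norm, ← integral_sub
        g.continuous.integrable_of_compactSpace g'.continuous.integrable_of_compactSpace]
      simpa using norm_integral_le_of_norm_le_const (μ := (σ : Measure X))
        (ae_of_all _ fun x => (g - g').norm_coe_le_norm x)
  have hclosed : IsClosed {g : C(X, ℂ) | Tendsto (fun i => ∫ x, g x ∂ρs i) l (𝓝 (∫ x, g x ∂ρ))} :=
    (LipschitzWith.uniformEquicontinuous _ 1 fun i => hlip (ρs i)).equicontinuous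
      |>.isClosed_setOfPred_tendsto (hlip ρ).continuous
  rw [ProbabilityMeasure.tendsto_iff_forall_integral_rclike_tendsto ℂ]
  intro f
  exact (hS.closure_eq ▸ closure_minimal h hclosed : _) (Set.mem_univ f.toContinuousMap)

theorem tendsto_coeff_zero_of_norm_sub_sum_le {ι : Type*} {l : Filter ι} {a : ι → ℕ → ℂ}
    {F : ι → ℝ → ℂ} {δ C : ℝ} (hδ : 0 < δ)
    (hF : ∀ t ∈ Set.Ioo 0 δ, Tendsto (F · t) l (𝓝 0))
    (hrem : ∀ i k, ∀ t ∈ Set.Ioo 0 δ,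
      ‖F i t - ∑ j ∈ Finset.range k, a i j * (t : ℂ) ^ j‖ ≤ C * t ^ k)
    (k : ℕ) : Tendsto (a · k) l (𝓝 0) := by
  induction k using Nat.strong_induction_on with
  | _ k ih =>
  rw [Metric.tendsto_nhds]
  intro ε hε
  -- `t` is small enough that the remainder `C t^(k+1)` of order `k + 1` is below `ε tᵏ / 2`
  set t := min (δ / 2) (ε / (2 * (|C| + 1)))
  have ht0 : 0 < t := lt_min (by positivity) (by positivity)
  have ht : t ∈ Set.Ioo 0 δ := ⟨ht0, (min_le_left _ _).trans_lt (by linarith)⟩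
  have hCt : C * t < ε / 2 := by
    have : (|C| + 1) * t ≤ ε / 2 := by
      rw [← le_div_iff₀' (by positivity), div_div]; exact min_le_right _ _
    nlinarith [le_abs_self C]
  have hS : Tendsto (fun i => F i t - ∑ j ∈ Finset.range k, a i j * (t : ℂ) ^ j) l (𝓝 0) := by
    simpa using (hF t ht).sub
      (tendsto_finsetSum _ fun j hj => (ih j (Finset.mem_range.mp hj)).mul_const _)
  have htk : 0 < t ^ k := by positivity
  filter_upwards [NormedAddGroup.tendsto_nhds_zero.mp hS (ε / 2 * t ^ k) (by positivity)]
    with i hi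
  rw [dist_zero_right]
  have hcoeff : ‖a i k‖ * t ^ k ≤
      ‖F i t - ∑ j ∈ Finset.range k, a i j * (t : ℂ) ^ j‖ + C * t ^ (k + 1) :=
    calc ‖a i k‖ * t ^ k
        = ‖(F i t - ∑ j ∈ Finset.range k, a i j * (t : ℂ) ^ j) -
            (F i t - ∑ j ∈ Finset.range (k + 1), a i j * (t : ℂ) ^ j)‖ := by
          rw [Finset.sum_range_succ, sub_sub_sub_cancel_left, add_sub_cancel_left, norm_mul,
            norm_pow, Complex.norm_real, Real.norm_of_nonneg ht0.le]
      _ ≤ _ := (norm_sub_le _ _).trans (by gcongr; exact hrem i (k + 1) t ht)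
  refine lt_of_mul_lt_mul_right (a := t ^ k) ?_ htk.le
  calc ‖a i k‖ * t ^ k ≤ ε / 2 * t ^ k + C * t * t ^ k := by rw [pow_succ] at hcoeff; linarith
    _ < ε * t ^ k := by nlinarith

section Circle

variable {z w : ℂ}

theorem one_sub_norm_le_norm_one_sub_mul (z : ℂ) (x : Circle) : 1 - ‖z‖ ≤ ‖1 - z * x‖ := by
  simpa [Circle.norm_coe] using norm_sub_norm_le (1 : ℂ) (z * x)

theorem one_sub_mul_ne_zero_of_norm_lt_one (hz : ‖z‖ < 1) (x : Circle) : 1 - z * x ≠ 0 :=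
  norm_pos_iff.mp ((sub_pos.mpr hz).trans_le (one_sub_norm_le_norm_one_sub_mul z x))

theorem continuous_div_one_sub_mul (hz : ‖z‖ < 1) :
    Continuous fun x : Circle => z * x / (1 - z * x) :=
  (by fun_prop : Continuous fun x : Circle => z * x).div (by fun_prop)
    (one_sub_mul_ne_zero_of_norm_lt_one hz)

theorem continuous_inv_one_sub_mul (hz : ‖z‖ < 1) :
    Continuous fun x : Circle => (1 - z * x)⁻¹ :=
  (by fun_prop : Continuous fun x : Circle => 1 - z * x).inv₀
    (one_sub_mul_ne_zero_of_norm_lt_one hz)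

variable {σ : Measure Circle} [IsProbabilityMeasure σ]

theorem one_add_psiM_eq_integral (hz : ‖z‖ < 1) :
    1 + psiM σ z = ∫ x : Circle, (1 - z * x)⁻¹ ∂σ := by
  have hne := one_sub_mul_ne_zero_of_norm_lt_one hz
  have hker : ∀ x : Circle, z * x / (1 - z * x) = (1 - z * x)⁻¹ - 1 := fun x => by
    field_simp [hne x]; ring
  simp_rw [psiM, hker, integral_sub (continuous_inv_one_sub_mul hz).integrable_of_compactSpace
      (integrable_const _),
    integral_const, probReal_univ, one_smul, add_sub_cancel]

theorem half_lt_re_one_add_psiM (hz : ‖z‖ < 1) : 1 / 2 < (1 + psiM σ z).re := by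
  have hcont := continuous_inv_one_sub_mul hz
  have hbound : ∀ x : Circle, 1 / (1 + ‖z‖) ≤ (1 - z * x)⁻¹.re := fun x => by
    simpa [Circle.norm_coe] using
      one_div_one_add_norm_le_re_inv_one_sub (w := z * x) (by simpa [Circle.norm_coe])
  have hre : 1 / (1 + ‖z‖) ≤ (1 + psiM σ z).re := by
    rw [one_add_psiM_eq_integral hz, ← reCLM_apply, ← reCLM.integral_comp_comm
      hcont.integrable_of_compactSpace]
    simpa using integral_mono (μ := σ) (integrable_const _)
      (reCLM.continuous.comp hcont).integrable_of_compactSpace hbound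
  calc (1 : ℝ) / 2 < 1 / (1 + ‖z‖) := by gcongr; linarith
    _ ≤ _ := hre

theorem norm_psiM_lt_norm_one_add_psiM (hz : ‖z‖ < 1) : ‖psiM σ z‖ < ‖1 + psiM σ z‖ := by
  have h := half_lt_re_one_add_psiM (σ := σ) hz
  rw [← sq_lt_sq₀ (norm_nonneg _) (norm_nonneg _), ← normSq_eq_norm_sq, ← normSq_eq_norm_sq,
    normSq_apply, normSq_apply]
  simp only [add_re, add_im, one_re, one_im] at *
  nlinarith

theorem one_add_psiM_ne_zero (hz : ‖z‖ < 1) : 1 + psiM σ z ≠ 0 :=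
  norm_pos_iff.mp ((norm_nonneg _).trans_lt (norm_psiM_lt_norm_one_add_psiM hz))

theorem norm_Km_lt_one (hz : ‖z‖ < 1) : ‖Km σ z‖ < 1 := by
  rw [Km, norm_div, div_lt_one (norm_pos_iff.mpr (one_add_psiM_ne_zero hz))]
  exact norm_psiM_lt_norm_one_add_psiM hz

theorem psiM_eq_Km_div_one_sub_Km (hz : ‖z‖ < 1) : psiM σ z = Km σ z / (1 - Km σ z) := by
  have := one_add_psiM_ne_zero (σ := σ) hz
  rw [Km]
  field_simp
  ring

theorem norm_psiM_sub_psiM_le {r : ℝ} (hr : r < 1) (hz : ‖z‖ ≤ r) (hw : ‖w‖ ≤ r) :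
    ‖psiM σ z - psiM σ w‖ ≤ ‖z - w‖ / (1 - r) ^ 2 := by
  have hz1 := hz.trans_lt hr
  have hw1 := hw.trans_lt hr
  have hbound : ∀ x : Circle, ‖(1 - z * x)⁻¹ - (1 - w * x)⁻¹‖ ≤ ‖z - w‖ / (1 - r) ^ 2 := by
    intro x
    have hzx : 1 - r ≤ ‖1 - z * x‖ := by linarith [one_sub_norm_le_norm_one_sub_mul z x]
    have hwx : 1 - r ≤ ‖1 - w * x‖ := by linarith [one_sub_norm_le_norm_one_sub_mul w x]
    rw [inv_sub_inv (one_sub_mul_ne_zero_of_norm_lt_one hz1 x)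
      (one_sub_mul_ne_zero_of_norm_lt_one hw1 x), norm_div, norm_mul, sq,
      show 1 - w * x - (1 - z * x) = (z - w) * x by ring, norm_mul, Circle.norm_coe, mul_one]
    gcongr
  calc ‖psiM σ z - psiM σ w‖
      = ‖∫ x : Circle, ((1 - z * x)⁻¹ - (1 - w * x)⁻¹) ∂σ‖ := by
        rw [integral_sub (continuous_inv_one_sub_mul hz1).integrable_of_compactSpace
          (continuous_inv_one_sub_mul hw1).integrable_of_compactSpace,
          ← one_add_psiM_eq_integral hz1, ← one_add_psiM_eq_integral hw1, add_sub_add_left_eq_sub]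
    _ ≤ ‖z - w‖ / (1 - r) ^ 2 := by
        simpa using norm_integral_le_of_norm_le_const (μ := σ) (ae_of_all _ hbound)

theorem norm_one_add_psiM_sub_sum_le (hz : ‖z‖ < 1) (k : ℕ) :
    ‖1 + psiM σ z - ∑ j ∈ Finset.range k, (∫ x : Circle, (x : ℂ) ^ j ∂σ) * z ^ j‖ ≤
      ‖z‖ ^ k / (1 - ‖z‖) := by
  have hne := one_sub_mul_ne_zero_of_norm_lt_one hz
  have hpow : ∀ j, Integrable (fun x : Circle => (z * x) ^ j) σ := fun j =>
    (by fun_prop : Continuous fun x : Circle => (z * x) ^ j).integrable_of_compactSpace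
  have hsum : ∑ j ∈ Finset.range k, (∫ x : Circle, (x : ℂ) ^ j ∂σ) * z ^ j =
      ∫ x : Circle, ∑ j ∈ Finset.range k, (z * x) ^ j ∂σ := by
    rw [integral_finsetSum _ fun j _ => hpow j]
    simp_rw [mul_pow, integral_const_mul, mul_comm]
  have hgeom : ∀ x : Circle,
      (1 - z * x)⁻¹ - ∑ j ∈ Finset.range k, (z * x) ^ j = (z * x) ^ k / (1 - z * x) := by
    intro x
    have h1 : z * x ≠ 1 := fun h => hne x (by rw [h, sub_self])
    rw [geom_sum_eq h1]
    field_simp [hne x, sub_ne_zero.mpr h1]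
    ring
  have hbound : ∀ x : Circle, ‖(z * x) ^ k / (1 - z * x)‖ ≤ ‖z‖ ^ k / (1 - ‖z‖) := by
    intro x
    rw [norm_div, norm_pow, norm_mul, Circle.norm_coe, mul_one]
    gcongr
    exact one_sub_norm_le_norm_one_sub_mul z x
  rw [one_add_psiM_eq_integral hz, hsum, ← integral_sub
    (continuous_inv_one_sub_mul hz).integrable_of_compactSpace
    (integrable_finsetSum _ fun j _ => hpow j)]
  simp_rw [hgeom]
  simpa using norm_integral_le_of_norm_le_const (μ := σ) (ae_of_all _ hbound)

end Circle

section Convergence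

variable {ι : Type*} {l : Filter ι} {μs : ι → ProbabilityMeasure Circle}
  {μ : ProbabilityMeasure Circle} {z w : ℂ}

theorem tendsto_psiM_apply (hμ : Tendsto μs l (𝓝 μ)) (hz : ‖z‖ < 1) :
    Tendsto (fun i => psiM (μs i) z) l (𝓝 (psiM μ z)) :=
  (ProbabilityMeasure.tendsto_iff_forall_integral_rclike_tendsto ℂ).mp hμ
    (BoundedContinuousFunction.mkOfCompact ⟨_, continuous_div_one_sub_mul hz⟩)

theorem tendsto_psiM (hμ : Tendsto μs l (𝓝 μ)) {ws : ι → ℂ} (hws : Tendsto ws l (𝓝 w))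
    (hw : ‖w‖ < 1) : Tendsto (fun i => psiM (μs i) (ws i)) l (𝓝 (psiM μ w)) := by
  obtain ⟨r, hwr, hr⟩ := exists_between hw
  have hws_le : ∀ᶠ i in l, ‖ws i‖ ≤ r :=
    (hws.norm.eventually (gt_mem_nhds hwr)).mono fun _ => le_of_lt
  have hmajorant :
      Tendsto (fun i => ‖ws i - w‖ / (1 - r) ^ 2 + ‖psiM (μs i) w - psiM μ w‖) l (𝓝 0) := by
    simpa using ((hws.sub_const w).norm.div_const _).add
      (tendsto_iff_norm_sub_tendsto_zero.mp (tendsto_psiM_apply hμ hw))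
  rw [tendsto_iff_norm_sub_tendsto_zero]
  refine squeeze_zero' (.of_forall fun _ => norm_nonneg _) ?_ hmajorant
  filter_upwards [hws_le] with i hi
  calc ‖psiM (μs i) (ws i) - psiM μ w‖
      ≤ ‖psiM (μs i) (ws i) - psiM (μs i) w‖ + ‖psiM (μs i) w - psiM μ w‖ :=
        norm_sub_le_norm_sub_add_norm_sub _ _ _
    _ ≤ _ := by gcongr; exact norm_psiM_sub_psiM_le hr hi hwr.le

theorem tendsto_Km (hμ : Tendsto μs l (𝓝 μ)) {ws : ι → ℂ} (hws : Tendsto ws l (𝓝 w))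
    (hw : ‖w‖ < 1) : Tendsto (fun i => Km (μs i) (ws i)) l (𝓝 (Km μ w)) :=
  have hψ := tendsto_psiM hμ hws hw
  hψ.div (tendsto_const_nhds.add hψ) (one_add_psiM_ne_zero hw)

theorem tendsto_psiM_apply_of_tendsto_Km (hz : ‖z‖ < 1)
    (hK : Tendsto (fun i => Km (μs i) z) l (𝓝 (Km μ z))) :
    Tendsto (fun i => psiM (μs i) z) l (𝓝 (psiM μ z)) := by
  have hK1 : 1 - Km μ z ≠ 0 := sub_ne_zero.mpr fun h => by
    simpa [← h] using norm_Km_lt_one (σ := (μ : Measure Circle)) hz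
  simp_rw [psiM_eq_Km_div_one_sub_Km hz]
  exact hK.div (tendsto_const_nhds.sub hK) hK1

end Convergence

section Moments

variable {ι : Type*} {l : Filter ι} {ρs : ι → ProbabilityMeasure Circle}
  {ρ : ProbabilityMeasure Circle}

theorem tendsto_integral_pow_of_tendsto_psiM
    (h : ∀ t ∈ Set.Ioo (0 : ℝ) (1 / 2), Tendsto (fun i => psiM (ρs i) t) l (𝓝 (psiM ρ t)))
    (k : ℕ) :
    Tendsto (fun i => ∫ x : Circle, (x : ℂ) ^ k ∂ρs i) l (𝓝 (∫ x : Circle, (x : ℂ) ^ k ∂ρ)) := by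
  refine tendsto_sub_nhds_zero_iff.mp <| tendsto_coeff_zero_of_norm_sub_sum_le
    (a := fun i j => (∫ x : Circle, (x : ℂ) ^ j ∂ρs i) - ∫ x : Circle, (x : ℂ) ^ j ∂ρ)
    (F := fun i t => psiM (ρs i) t - psiM ρ t) (C := 4) (by norm_num : (0 : ℝ) < 1 / 2)
    (fun t ht => tendsto_sub_nhds_zero_iff.mpr (h t ht)) ?_ k
  intro i k t ht
  have ht1 : ‖(t : ℂ)‖ = t := by rw [Complex.norm_real, Real.norm_of_nonneg ht.1.le]
  have hrem := fun σ : ProbabilityMeasure Circle =>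
    ht1 ▸ norm_one_add_psiM_sub_sum_le (σ := σ) (by rw [ht1]; linarith [ht.2]) k
  have htail : t ^ k / (1 - t) ≤ 2 * t ^ k := by
    rw [div_le_iff₀ (by linarith [ht.2])]
    nlinarith [ht.2, pow_pos ht.1 k]
  calc ‖psiM (ρs i) t - psiM ρ t - ∑ j ∈ Finset.range k,
        ((∫ x : Circle, (x : ℂ) ^ j ∂ρs i) - ∫ x : Circle, (x : ℂ) ^ j ∂ρ) * (t : ℂ) ^ j‖
      = ‖(1 + psiM (ρs i) t -
            ∑ j ∈ Finset.range k, (∫ x : Circle, (x : ℂ) ^ j ∂ρs i) * (t : ℂ) ^ j) -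
          (1 + psiM ρ t - ∑ j ∈ Finset.range k, (∫ x : Circle, (x : ℂ) ^ j ∂ρ) * (t : ℂ) ^ j)‖ := by
        simp only [sub_mul, Finset.sum_sub_distrib]
        congr 1
        ring
    _ ≤ t ^ k / (1 - t) + t ^ k / (1 - t) := (norm_sub_le _ _).trans (add_le_add (hrem _) (hrem _))
    _ ≤ 4 * t ^ k := by linarith

theorem tendsto_integral_pow_mul_conj_pow
    (h : ∀ k : ℕ, Tendsto (fun i => ∫ x : Circle, (x : ℂ) ^ k ∂ρs i) l
      (𝓝 (∫ x : Circle, (x : ℂ) ^ k ∂ρ))) (m n : ℕ) :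
    Tendsto (fun i => ∫ x : Circle, (x : ℂ) ^ m * conj (x : ℂ) ^ n ∂ρs i) l
      (𝓝 (∫ x : Circle, (x : ℂ) ^ m * conj (x : ℂ) ^ n ∂ρ)) := by
  have hunit : ∀ (x : Circle) (n : ℕ), (x : ℂ) ^ n * conj (x : ℂ) ^ n = 1 := fun x n => by
    rw [← mul_pow, mul_conj, Circle.normSq_coe, ofReal_one, one_pow]
  rcases le_total n m with hnm | hmn
  · obtain ⟨k, rfl⟩ := Nat.exists_eq_add_of_le hnm
    have hpow : ∀ x : Circle, (x : ℂ) ^ (n + k) * conj (x : ℂ) ^ n = (x : ℂ) ^ k := fun x => by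
      rw [pow_add, mul_right_comm, hunit, one_mul]
    simpa only [hpow] using h k
  · obtain ⟨k, rfl⟩ := Nat.exists_eq_add_of_le hmn
    have hpow : ∀ x : Circle, (x : ℂ) ^ m * conj (x : ℂ) ^ (m + k) = conj ((x : ℂ) ^ k) :=
      fun x => by rw [pow_add, ← mul_assoc, hunit, one_mul, map_pow]
    simp only [hpow, integral_conj]
    exact (continuous_conj.tendsto _).comp (h k)

theorem tendsto_of_tendsto_integral_pow
    (h : ∀ k : ℕ, Tendsto (fun i => ∫ x : Circle, (x : ℂ) ^ k ∂ρs i) l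
      (𝓝 (∫ x : Circle, (x : ℂ) ^ k ∂ρ))) :
    Tendsto ρs l (𝓝 ρ) := by
  set c : C(Circle, ℂ) := ⟨(↑), continuous_subtype_val⟩
  have hsep : (StarAlgebra.adjoin ℂ {c}).SeparatesPoints := fun x y hxy =>
    ⟨c, ⟨c, StarAlgebra.self_mem_adjoin_singleton ℂ c, rfl⟩,
      fun hc => hxy (Circle.coe_injective hc)⟩
  have hdense : Dense (StarAlgebra.adjoin ℂ {c} : Set C(Circle, ℂ)) := by
    rw [dense_iff_closure_eq, ← StarSubalgebra.topologicalClosure_coe,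
      ContinuousMap.starSubalgebra_topologicalClosure_eq_top_of_separatesPoints _ hsep]
    rfl
  refine ProbabilityMeasure.tendsto_of_forall_integral_tendsto_of_dense hdense fun g hg => ?_
  replace hg : g ∈ Submodule.span ℂ (Submonoid.closure ({c, star c} : Set C(Circle, ℂ))) := by
    rwa [← Set.singleton_union, ← Set.star_singleton, ← StarAlgebra.adjoin_eq_span]
  induction hg using Submodule.span_induction with
  | mem g hg =>
    obtain ⟨m, n, rfl⟩ := (Submonoid.mem_closure_pair _ _ _).mp hg
    simp only [ContinuousMap.mul_apply, ContinuousMap.pow_apply, ContinuousMap.star_apply,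
      star_def]
    exact tendsto_integral_pow_mul_conj_pow h m n
  | zero => simpa using tendsto_const_nhds
  | add g g' _ _ hg hg' =>
    simpa only [ContinuousMap.add_apply, integral_add g.continuous.integrable_of_compactSpace
      g'.continuous.integrable_of_compactSpace] using hg.add hg'
  | smul a g _ hg => simpa only [ContinuousMap.smul_apply, integral_smul] using hg.const_smul a

end Moments

/-- The monotone convolution is weakly continuous: if `μₙ → μ` and `νₙ → ν` weakly,
then `μₙ ▷ νₙ → μ ▷ ν` weakly (convolutions being characterized by
`K_{μ ▷ ν} = K_μ ∘ K_ν` on the open unit disc). -/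
theorem monotone_convolution_weakly_continuous
    (μn νn ρn : ℕ → ProbabilityMeasure Circle)
    (μ ν ρ : ProbabilityMeasure Circle)
    (hμ : Tendsto μn atTop (nhds μ)) (hν : Tendsto νn atTop (nhds ν))
    (hKρn : ∀ n, ∀ z ∈ ball (0 : ℂ) 1,
      Km (ρn n : Measure Circle) z = Km (μn n : Measure Circle) (Km (νn n : Measure Circle) z))
    (hKρ : ∀ z ∈ ball (0 : ℂ) 1,
      Km (ρ : Measure Circle) z = Km (μ : Measure Circle) (Km (ν : Measure Circle) z)) :
    Tendsto ρn atTop (nhds ρ) := by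
  have hψ : ∀ z ∈ ball (0 : ℂ) 1, Tendsto (fun n => psiM (ρn n) z) atTop (𝓝 (psiM ρ z)) := by
    intro z hz
    have hz1 : ‖z‖ < 1 := mem_ball_zero_iff.mp hz
    refine tendsto_psiM_apply_of_tendsto_Km hz1 ?_
    simp only [hKρn _ z hz, hKρ z hz]
    exact tendsto_Km hμ (tendsto_Km hν tendsto_const_nhds hz1) (norm_Km_lt_one hz1)
  refine tendsto_of_tendsto_integral_pow (tendsto_integral_pow_of_tendsto_psiM fun t ht => hψ t ?_)
  rw [mem_ball_zero_iff, Complex.norm_real, Real.norm_of_nonneg ht.1.le]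
  linarith [ht.2]
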